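/- arXiv:1503.03927 — 4 statements merged into one kernel-verified Lean document; each statement's English description precedes it below -/
import Mathlib

section
/- There exists a constant λ > 0 such that A(q)p·p ≥ λ|p|² for all q ∈ ℝ^N and all p ∈ ℝ^N; that is, the kinetic-energy matrix of the planar N-pendulum is positive definite uniformly in the configuration q. -/
open MeasureTheory Real Finset Filter

/-- α_j = Σ_{s=j}^N m_s -/
noncomputable def alphaC {N : ℕ} (m : Fin N → ℝ) (j : Fin N) : ℝ :=
  ∑ s ∈ Finset.univ.filter (fun s => j ≤ s), m s

/-- β_j = α_j ℓ_j -/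
noncomputable def betaC {N : ℕ} (m ℓ : Fin N → ℝ) (j : Fin N) : ℝ :=
  alphaC m j * ℓ j

/-- The kinetic form A(q)p·p of the planar N-pendulum. -/
noncomputable def kinForm {N : ℕ} (m ℓ : Fin N → ℝ) (q p : Fin N → ℝ) : ℝ :=
  (∑ i, alphaC m i * ℓ i ^ 2 * p i ^ 2) +
    ∑ i, ∑ j ∈ Finset.univ.filter (fun j => i < j),
      2 * alphaC m j * ℓ i * ℓ j * Real.cos (q i - q j) * (p i * p j)

/-- The potential V(q) = g Σ β_j cos q_j. -/
noncomputable def potV {N : ℕ} (m ℓ : Fin N → ℝ) (g : ℝ) (q : Fin N → ℝ) : ℝ :=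
  g * ∑ j, betaC m ℓ j * Real.cos (q j)

/-- Splitting a symmetric double sum into diagonal and twice the upper triangle. -/
lemma sum_sym_split {N : ℕ} (f : Fin N → Fin N → ℝ) (h : ∀ i j, f i j = f j i) :
    (∑ i, ∑ j, f i j) =
      (∑ i, f i i) + ∑ i, ∑ j ∈ Finset.univ.filter (fun j => i < j), 2 * f i j := by
  have hins : ∀ i : Fin N, Finset.univ.filter (fun j => ¬ i < j) =
      insert i (Finset.univ.filter (fun j : Fin N => j < i)) := by
    intro i
    ext j
    simp only [Finset.mem_filter, Finset.mem_univ, Finset.mem_insert, true_and, not_lt,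
      Fin.lt_def, Fin.le_def, Fin.ext_iff]
    omega
  have split : ∀ i : Fin N, (∑ j, f i j) =
      (∑ j ∈ Finset.univ.filter (fun j => i < j), f i j) +
        (f i i + ∑ j ∈ Finset.univ.filter (fun j : Fin N => j < i), f i j) := by
    intro i
    rw [← Finset.sum_filter_add_sum_filter_not Finset.univ (fun j => i < j), hins i,
      Finset.sum_insert (by simp)]
  have swap : (∑ i, ∑ j ∈ Finset.univ.filter (fun j : Fin N => j < i), f i j)
      = ∑ i, ∑ j ∈ Finset.univ.filter (fun j : Fin N => i < j), f i j := by
    rw [Finset.sum_comm' (s' := fun j => Finset.univ.filter (fun i : Fin N => j < i))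
      (t' := Finset.univ) (by intro x y; simp)]
    exact Finset.sum_congr rfl fun i _ => Finset.sum_congr rfl fun j _ => h j i
  calc (∑ i, ∑ j, f i j) = ∑ i, ((∑ j ∈ Finset.univ.filter (fun j => i < j), f i j) +
        (f i i + ∑ j ∈ Finset.univ.filter (fun j : Fin N => j < i), f i j)) :=
        Finset.sum_congr rfl fun i _ => split i
    _ = (∑ i, f i i) + ∑ i, 2 * ∑ j ∈ Finset.univ.filter (fun j => i < j), f i j := by
        rw [Finset.sum_add_distrib, Finset.sum_add_distrib, swap]
        rw [← Finset.mul_sum]; ring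
    _ = _ := by simp [Finset.mul_sum]

/-- The kinetic form is the weighted sum of squared speeds of the individual masses. -/
lemma kin_eq {N : ℕ} (m ℓ q p : Fin N → ℝ) :
    kinForm m ℓ q p = ∑ k, m k *
      ((∑ i ∈ Finset.univ.filter (fun i => i ≤ k), ℓ i * p i * Real.cos (q i)) ^ 2 +
       (∑ i ∈ Finset.univ.filter (fun i => i ≤ k), ℓ i * p i * Real.sin (q i)) ^ 2) := by
  set c : Fin N → Fin N → ℝ :=
    fun i j => ℓ i * ℓ j * Real.cos (q i - q j) * (p i * p j) with hc
  set F : Fin N → Fin N → ℝ :=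
    fun i j => (∑ k ∈ Finset.univ.filter (fun k => i ≤ k ∧ j ≤ k), m k) * c i j with hF
  have expand : ∀ k : Fin N,
      (∑ i ∈ Finset.univ.filter (fun i => i ≤ k), ℓ i * p i * Real.cos (q i)) ^ 2 +
       (∑ i ∈ Finset.univ.filter (fun i => i ≤ k), ℓ i * p i * Real.sin (q i)) ^ 2 =
      ∑ i ∈ Finset.univ.filter (fun i => i ≤ k),
        ∑ j ∈ Finset.univ.filter (fun j => j ≤ k), c i j := by
    intro k
    rw [sq, sq, Finset.sum_mul_sum, Finset.sum_mul_sum, ← Finset.sum_add_distrib]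
    refine Finset.sum_congr rfl fun i _ => ?_
    rw [← Finset.sum_add_distrib]
    refine Finset.sum_congr rfl fun j _ => ?_
    simp only [hc]
    rw [Real.cos_sub]
    ring
  have swap1 : (∑ k, m k * ∑ i ∈ Finset.univ.filter (fun i => i ≤ k),
        ∑ j ∈ Finset.univ.filter (fun j => j ≤ k), c i j) = ∑ i, ∑ j, F i j := by
    calc (∑ k, m k * ∑ i ∈ Finset.univ.filter (fun i => i ≤ k),
          ∑ j ∈ Finset.univ.filter (fun j => j ≤ k), c i j)
        = ∑ k, ∑ i ∈ Finset.univ.filter (fun i => i ≤ k),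
            ∑ j ∈ Finset.univ.filter (fun j => j ≤ k), m k * c i j := by
          simp [Finset.mul_sum]
      _ = ∑ i, ∑ k ∈ Finset.univ.filter (fun k => i ≤ k),
            ∑ j ∈ Finset.univ.filter (fun j => j ≤ k), m k * c i j := by
          rw [Finset.sum_comm' (s' := fun i => Finset.univ.filter (fun k : Fin N => i ≤ k))
            (t' := Finset.univ) (by intro x y; simp)]
      _ = ∑ i, ∑ j, ∑ k ∈ Finset.univ.filter (fun k => i ≤ k ∧ j ≤ k), m k * c i j := by
          refine Finset.sum_congr rfl fun i _ => ?_
          rw [Finset.sum_comm' (s' := fun j => Finset.univ.filter (fun k : Fin N => i ≤ k ∧ j ≤ k))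
            (t' := Finset.univ) (by intro x y; simp)]
      _ = ∑ i, ∑ j, F i j := by
          simp [hF, Finset.sum_mul]
  have hFsym : ∀ i j, F i j = F j i := by
    intro i j
    have h1 : Finset.univ.filter (fun k => i ≤ k ∧ j ≤ k)
        = Finset.univ.filter (fun k : Fin N => j ≤ k ∧ i ≤ k) := by
      ext k; simp [and_comm]
    have h2 : Real.cos (q i - q j) = Real.cos (q j - q i) := by
      rw [← Real.cos_neg, neg_sub]
    simp only [hF, hc, h1, h2]
    ring
  have diag : ∀ i, F i i = alphaC m i * ℓ i ^ 2 * p i ^ 2 := by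
    intro i
    have h1 : Finset.univ.filter (fun k => i ≤ k ∧ i ≤ k)
        = Finset.univ.filter (fun k : Fin N => i ≤ k) := by
      ext k; simp
    simp only [hF, hc, h1, sub_self, Real.cos_zero, alphaC]
    ring
  have off : ∀ i j : Fin N, i < j →
      2 * F i j = 2 * alphaC m j * ℓ i * ℓ j * Real.cos (q i - q j) * (p i * p j) := by
    intro i j hij
    have h1 : Finset.univ.filter (fun k => i ≤ k ∧ j ≤ k)
        = Finset.univ.filter (fun k : Fin N => j ≤ k) := by
      ext k
      simp only [Finset.mem_filter, Finset.mem_univ, true_and, Fin.le_def]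
      have := Fin.lt_def.mp hij
      omega
    simp only [hF, hc, h1, alphaC]
    ring
  calc kinForm m ℓ q p
      = (∑ i, F i i) + ∑ i, ∑ j ∈ Finset.univ.filter (fun j => i < j), 2 * F i j := by
        rw [kinForm]
        congr 1
        · exact Finset.sum_congr rfl fun i _ => (diag i).symm
        · refine Finset.sum_congr rfl fun i _ => Finset.sum_congr rfl fun j hj => ?_
          exact (off i j (Finset.mem_filter.mp hj).2).symm
    _ = ∑ i, ∑ j, F i j := (sum_sym_split F hFsym).symm
    _ = _ := by
        rw [← swap1]
        exact Finset.sum_congr rfl fun k _ => by rw [expand k]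

theorem stmt_0 (N : ℕ) (hN : 1 ≤ N) (m ℓ : Fin N → ℝ)
    (hm : ∀ i, 0 < m i) (hl : ∀ i, 0 < ℓ i) :
    ∃ lam : ℝ, 0 < lam ∧ ∀ q p : Fin N → ℝ,
      lam * ∑ i, (p i) ^ 2 ≤ kinForm m ℓ q p := by
  haveI : Nonempty (Fin N) := ⟨⟨0, hN⟩⟩
  obtain ⟨i0, -, hμ⟩ := Finset.exists_min_image Finset.univ m Finset.univ_nonempty
  obtain ⟨j0, -, hL⟩ := Finset.exists_min_image Finset.univ ℓ Finset.univ_nonempty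
  have hmi0 := hm i0
  have hlj0 := hl j0
  refine ⟨m i0 * ℓ j0 ^ 2 / 4, by positivity, ?_⟩
  intro q p
  set X : ℕ → ℝ :=
    fun n => ∑ i ∈ Finset.univ.filter (fun i : Fin N => (i : ℕ) < n),
      ℓ i * p i * Real.cos (q i) with hX
  set Y : ℕ → ℝ :=
    fun n => ∑ i ∈ Finset.univ.filter (fun i : Fin N => (i : ℕ) < n),
      ℓ i * p i * Real.sin (q i) with hY
  set T : ℕ → ℝ := fun n => X n ^ 2 + Y n ^ 2 with hT
  have hfk : ∀ k : Fin N, Finset.univ.filter (fun i : Fin N => (i : ℕ) < (k : ℕ) + 1)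
      = Finset.univ.filter (fun i => i ≤ k) := by
    intro k
    ext i
    simp only [Finset.mem_filter, Finset.mem_univ, true_and, Fin.le_def]
    omega
  have key : kinForm m ℓ q p = ∑ k : Fin N, m k * T ((k : ℕ) + 1) := by
    rw [kin_eq]
    refine Finset.sum_congr rfl fun k _ => ?_
    simp only [hT, hX, hY, hfk k]
  have hT0 : T 0 = 0 := by simp [hT, hX, hY]
  have hTnn : ∀ n, 0 ≤ T n := fun n => by simp only [hT]; positivity
  have hins : ∀ k : Fin N, Finset.univ.filter (fun i : Fin N => (i : ℕ) < (k : ℕ) + 1)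
      = insert k (Finset.univ.filter (fun i : Fin N => (i : ℕ) < (k : ℕ))) := by
    intro k
    ext i
    simp only [Finset.mem_filter, Finset.mem_univ, true_and, Finset.mem_insert, Fin.ext_iff]
    omega
  have hXs : ∀ k : Fin N, X ((k : ℕ) + 1) = X (k : ℕ) + ℓ k * p k * Real.cos (q k) := by
    intro k
    simp only [hX]
    rw [hins k, Finset.sum_insert (by simp)]
    ring
  have hYs : ∀ k : Fin N, Y ((k : ℕ) + 1) = Y (k : ℕ) + ℓ k * p k * Real.sin (q k) := by
    intro k
    simp only [hY]
    rw [hins k, Finset.sum_insert (by simp)]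
    ring
  have pointwise : ∀ k : Fin N,
      ℓ j0 ^ 2 * p k ^ 2 ≤ 2 * (T (k : ℕ) + T ((k : ℕ) + 1)) := by
    intro k
    have h1 : (ℓ k * p k * Real.cos (q k)) ^ 2 + (ℓ k * p k * Real.sin (q k)) ^ 2
        = (ℓ k * p k) ^ 2 * (Real.sin (q k) ^ 2 + Real.cos (q k) ^ 2) := by ring
    rw [Real.sin_sq_add_cos_sq, mul_one] at h1
    have hl2 : ℓ j0 ^ 2 * p k ^ 2 ≤ ℓ k ^ 2 * p k ^ 2 :=
      mul_le_mul_of_nonneg_right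
        (pow_le_pow_left₀ (le_of_lt hlj0) (hL k (Finset.mem_univ k)) 2) (sq_nonneg _)
    have ha : (ℓ k * p k * Real.cos (q k)) ^ 2
        ≤ 2 * X (k : ℕ) ^ 2 + 2 * X ((k : ℕ) + 1) ^ 2 := by
      rw [hXs k]
      nlinarith [sq_nonneg (2 * X (k : ℕ) + ℓ k * p k * Real.cos (q k))]
    have hb : (ℓ k * p k * Real.sin (q k)) ^ 2
        ≤ 2 * Y (k : ℕ) ^ 2 + 2 * Y ((k : ℕ) + 1) ^ 2 := by
      rw [hYs k]
      nlinarith [sq_nonneg (2 * Y (k : ℕ) + ℓ k * p k * Real.sin (q k))]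
    simp only [hT]
    nlinarith [ha, hb, hl2, h1]
  have hshift : ∑ k : Fin N, T (k : ℕ) ≤ ∑ k : Fin N, T ((k : ℕ) + 1) := by
    rw [Fin.sum_univ_eq_sum_range (fun n => T n) N,
      Fin.sum_univ_eq_sum_range (fun n => T (n + 1)) N]
    have e1 := Finset.sum_range_succ' T N
    have e2 := Finset.sum_range_succ T N
    have := hTnn N
    linarith
  have A1 : ∑ k : Fin N, ℓ j0 ^ 2 * p k ^ 2
      ≤ ∑ k : Fin N, 2 * (T (k : ℕ) + T ((k : ℕ) + 1)) :=
    Finset.sum_le_sum fun k _ => pointwise k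
  have A2 : (∑ k : Fin N, 2 * (T (k : ℕ) + T ((k : ℕ) + 1)))
      = 2 * (∑ k : Fin N, T (k : ℕ)) + 2 * (∑ k : Fin N, T ((k : ℕ) + 1)) := by
    rw [← Finset.mul_sum, Finset.sum_add_distrib, mul_add]
  have A3 : m i0 * ∑ k : Fin N, T ((k : ℕ) + 1) ≤ ∑ k : Fin N, m k * T ((k : ℕ) + 1) := by
    rw [Finset.mul_sum]
    exact Finset.sum_le_sum fun k _ =>
      mul_le_mul_of_nonneg_right (hμ k (Finset.mem_univ k)) (hTnn _)
  have A4 : (∑ k : Fin N, ℓ j0 ^ 2 * p k ^ 2) = ℓ j0 ^ 2 * ∑ i, p i ^ 2 := by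
    rw [Finset.mul_sum]
  have h4U : ℓ j0 ^ 2 * (∑ i, p i ^ 2) ≤ 4 * ∑ k : Fin N, T ((k : ℕ) + 1) := by
    rw [← A4]
    linarith [A1, A2, hshift]
  have hfinal := mul_le_mul_of_nonneg_left h4U (le_of_lt hmi0)
  rw [key]
  nlinarith [hfinal, A3]
end

section
/- For every constant loop c ∈ ℝ^N (i.e. x(t) ≡ c), one has 𝓛₁(c) ≤ γ₁/T, where γ₁ = 2π²( Σ_{i=1}^N α_i ℓ_i² v_i² + Σ_{1≤i<j≤N, v_i = v_j} 2 α_j ℓ_i ℓ_j v_i v_j ). -/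
/-!
Along the loop `q(t) = c + 2πvt/T` the velocity `p = 2πv/T` is constant, so the kinetic form
depends on `t` only through `cos ((c i - c j) + 2π (v i - v j) t / T)`. Over `[0, T]` this
integrates to `0` unless `v i = v j`, and to `T cos (c i - c j)` if it does. For those resonant
pairs the coefficient `2 α_j ℓ_i ℓ_j p_i p_j = 2 α_j ℓ_i ℓ_j p_i²` is nonnegative, so bounding the
cosine by `1` gives `γ₁ / T`.
-/

open MeasureTheory Real Finset Filter

lemma alphaC_pos {N : ℕ} {m : Fin N → ℝ} (hm : ∀ i, 0 < m i) (j : Fin N) : 0 < alphaC m j :=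
  Finset.sum_pos (fun s _ => hm s) ⟨j, by simp⟩

lemma integral_cos_add_int_mul (a : ℝ) {T : ℝ} (hT : T ≠ 0) (k : ℤ) :
    ∫ t in (0:ℝ)..T, Real.cos (a + 2 * π * k / T * t) = if k = 0 then T * Real.cos a else 0 := by
  rcases eq_or_ne k 0 with rfl | hk
  · simp [mul_comm]
  · have hω : 2 * π * k / T ≠ 0 := by positivity
    rw [if_neg hk]
    simp_rw [add_comm a]
    rw [intervalIntegral.integral_comp_mul_add _ hω, mul_zero, zero_add, integral_cos,
      show 2 * π * k / T * T + a = a + k * (2 * π) by field_simp; ring,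
      Real.sin_add_int_mul_two_pi, sub_self, smul_zero]

lemma integral_kinForm {N : ℕ} (m ℓ : Fin N → ℝ) {q : ℝ → Fin N → ℝ} (hq : Continuous q)
    (p : Fin N → ℝ) (a b : ℝ) :
    ∫ t in a..b, kinForm m ℓ (q t) p =
      (b - a) * ∑ i, alphaC m i * ℓ i ^ 2 * p i ^ 2 +
        ∑ i, ∑ j ∈ Finset.univ.filter (fun j => i < j),
          2 * alphaC m j * ℓ i * ℓ j * (∫ t in a..b, Real.cos (q t i - q t j)) * (p i * p j) := by
  have hint {f : ℝ → ℝ} (hf : Continuous f) : IntervalIntegrable f volume a b :=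
    hf.intervalIntegrable a b
  simp only [kinForm]
  rw [intervalIntegral.integral_add intervalIntegrable_const (hint (by fun_prop)),
    intervalIntegral.integral_const, smul_eq_mul,
    intervalIntegral.integral_finsetSum fun i _ => hint (by fun_prop)]
  congr 1
  refine Finset.sum_congr rfl fun i _ => ?_
  rw [intervalIntegral.integral_finsetSum fun j _ => hint (by fun_prop)]
  refine Finset.sum_congr rfl fun j _ => ?_
  rw [intervalIntegral.integral_mul_const, intervalIntegral.integral_const_mul]

lemma integral_cos_sub_linear (a b : ℝ) {T : ℝ} (hT : T ≠ 0) (k n : ℤ) :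
    ∫ t in (0:ℝ)..T, Real.cos ((a + 2 * π * k * t / T) - (b + 2 * π * n * t / T)) =
      if k = n then T * Real.cos (a - b) else 0 := by
  have h : ∀ t : ℝ, (a + 2 * π * k * t / T) - (b + 2 * π * n * t / T) =
      (a - b) + 2 * π * ((k - n : ℤ) : ℝ) / T * t := fun t => by push_cast; ring
  simp_rw [h, integral_cos_add_int_mul _ hT, sub_eq_zero]

lemma integral_kinForm_linear {N : ℕ} (m ℓ : Fin N → ℝ) {T : ℝ} (hT : T ≠ 0) (v : Fin N → ℤ)
    (c p : Fin N → ℝ) :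
    ∫ t in (0:ℝ)..T, kinForm m ℓ (fun i => c i + 2 * π * (v i : ℝ) * t / T) p =
      T * ((∑ i, alphaC m i * ℓ i ^ 2 * p i ^ 2) +
        ∑ i, ∑ j ∈ Finset.univ.filter (fun j => i < j ∧ v i = v j),
          2 * alphaC m j * ℓ i * ℓ j * Real.cos (c i - c j) * (p i * p j)) := by
  rw [integral_kinForm m ℓ (by fun_prop) p, sub_zero, mul_add]
  congr 1
  rw [Finset.mul_sum]
  refine Finset.sum_congr rfl fun i _ => ?_
  rw [← Finset.filter_filter (fun j => i < j) (fun j => v i = v j),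
    Finset.sum_filter (fun j => v i = v j),
    Finset.mul_sum]
  refine Finset.sum_congr rfl fun j _ => ?_
  rw [integral_cos_sub_linear _ _ hT]
  split_ifs <;> ring

lemma sum_resonant_cos_le {N : ℕ} {m ℓ : Fin N → ℝ} (hm : ∀ i, 0 < m i) (hl : ∀ i, 0 < ℓ i)
    (v : Fin N → ℤ) (c : Fin N → ℝ) {p : Fin N → ℝ} (hp : ∀ i j, v i = v j → 0 ≤ p i * p j) :
    ∑ i, ∑ j ∈ Finset.univ.filter (fun j => i < j ∧ v i = v j),
        2 * alphaC m j * ℓ i * ℓ j * Real.cos (c i - c j) * (p i * p j) ≤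
      ∑ i, ∑ j ∈ Finset.univ.filter (fun j => i < j ∧ v i = v j),
        2 * alphaC m j * ℓ i * ℓ j * (p i * p j) := by
  refine Finset.sum_le_sum fun i _ => Finset.sum_le_sum fun j hj => ?_
  have hcoef : 0 ≤ 2 * alphaC m j * ℓ i * ℓ j := by
    have := alphaC_pos hm j; have := hl i; have := hl j; positivity
  exact mul_le_mul_of_nonneg_right (mul_le_of_le_one_right hcoef (Real.cos_le_one _))
    (hp i j (Finset.mem_filter.1 hj).2.2)

theorem stmt_2_general (N : ℕ) (m ℓ : Fin N → ℝ)
    (hm : ∀ i, 0 < m i) (hl : ∀ i, 0 < ℓ i)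
    (T : ℝ) (hT : 0 < T) (v : Fin N → ℤ) (c : Fin N → ℝ) :
    (1 / 2) * ∫ t in (0:ℝ)..T,
        kinForm m ℓ (fun i => c i + 2 * π * (v i : ℝ) * t / T)
          (fun i => 2 * π * (v i : ℝ) / T)
      ≤ (2 * π ^ 2 * ((∑ i, alphaC m i * ℓ i ^ 2 * (v i : ℝ) ^ 2)
          + ∑ i, ∑ j ∈ Finset.univ.filter (fun j => i < j ∧ v i = v j),
              2 * alphaC m j * ℓ i * ℓ j * (v i : ℝ) * (v j : ℝ))) / T := by
  set p : Fin N → ℝ := fun i => 2 * π * (v i : ℝ) / T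
  have hp : ∀ i j, v i = v j → 0 ≤ p i * p j := fun i j h => by
    simp only [p, h]; exact mul_self_nonneg _
  rw [integral_kinForm_linear m ℓ hT.ne']
  calc _ ≤ 1 / 2 * (T * ((∑ i, alphaC m i * ℓ i ^ 2 * p i ^ 2) +
          ∑ i, ∑ j ∈ Finset.univ.filter (fun j => i < j ∧ v i = v j),
            2 * alphaC m j * ℓ i * ℓ j * (p i * p j))) := by
        gcongr _ * (_ * (_ + ?_)); exact sum_resonant_cos_le hm hl v c hp
    _ = _ := by
        have h1 : ∑ i, alphaC m i * ℓ i ^ 2 * p i ^ 2 =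
            4 * π ^ 2 / T ^ 2 * ∑ i, alphaC m i * ℓ i ^ 2 * (v i : ℝ) ^ 2 := by
          rw [Finset.mul_sum]; exact Finset.sum_congr rfl fun i _ => by simp only [p]; ring
        have h2 : ∑ i, ∑ j ∈ Finset.univ.filter (fun j => i < j ∧ v i = v j),
              2 * alphaC m j * ℓ i * ℓ j * (p i * p j) =
            4 * π ^ 2 / T ^ 2 * ∑ i, ∑ j ∈ Finset.univ.filter (fun j => i < j ∧ v i = v j),
              2 * alphaC m j * ℓ i * ℓ j * (v i : ℝ) * (v j : ℝ) := by
          simp only [Finset.mul_sum]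
          exact Finset.sum_congr rfl fun i _ => Finset.sum_congr rfl fun j _ => by
            simp only [p]; ring
        rw [h1, h2]
        field_simp
        ring

theorem stmt_2 (N : ℕ) (hN : 1 ≤ N) (m ℓ : Fin N → ℝ)
    (hm : ∀ i, 0 < m i) (hl : ∀ i, 0 < ℓ i)
    (T : ℝ) (hT : 0 < T) (v : Fin N → ℤ) (c : Fin N → ℝ) :
    (1 / 2) * ∫ t in (0:ℝ)..T,
        kinForm m ℓ (fun i => c i + 2 * π * (v i : ℝ) * t / T)
          (fun i => 2 * π * (v i : ℝ) / T)
      ≤ (2 * π ^ 2 * ((∑ i, alphaC m i * ℓ i ^ 2 * (v i : ℝ) ^ 2)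
          + ∑ i, ∑ j ∈ Finset.univ.filter (fun j => i < j ∧ v i = v j),
              2 * alphaC m j * ℓ i * ℓ j * (v i : ℝ) * (v j : ℝ))) / T :=
  stmt_2_general N m ℓ hm hl T hT v c
end

section
/- Let m ≥ 1 and let b_1,…,b_m be real numbers. Then the set { (β(k+1) − β(k))/2 : 1 ≤ k ≤ 2^m − 1 } equals { b_m } ∪ { b_i − Σ_{j=i+1}^m b_j : 1 ≤ i ≤ m − 1 }. -/
/-!
Write `k = 2 ^ t * u` with `u` odd; `t < m` because `k < 2 ^ m`. Passing from `k - 1` to `k`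
clears the binary digits `0, …, t - 1` of `k - 1`, sets digit `t` and leaves the higher ones
alone. Digit `s` of `k - 1` is `τ_{m-s}(k)`, so
`β(k+1) - β(k) = 2 b_{m-t} - 2 ∑_{j > m-t} b_j`.
Every `t < m` occurs, e.g. at `k = 2 ^ t`; `t = 0` gives `b_m` and `t = m - i` gives the
`i`-th element of the second set.
-/

open Finset

/-- τ_i(k): the i-th binary digit of k−1, i.e. k − 1 = Σ_{i=1}^m τ_i(k)·2^{m−i}. -/
def tauD (m k i : ℕ) : ℕ := ((k - 1) / 2 ^ (m - i)) % 2

/-- β(k) = Σ_{i=1}^m (−1)^{1−τ_i(k)} b_i. -/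
noncomputable def betaD (m : ℕ) (b : ℕ → ℝ) (k : ℕ) : ℝ :=
  ∑ i ∈ Finset.Icc 1 m, (if tauD m k i = 1 then b i else -b i)

namespace Nat

lemma exists_two_pow_mul_odd_eq {t u : ℕ} (hu : Odd u) :
    ∃ w, 2 ^ t * u = 2 ^ (t + 1) * w + 2 ^ t := by
  obtain ⟨w, rfl⟩ := hu
  exact ⟨w, by ring⟩

lemma testBit_two_pow_mul_odd_of_le {t u s : ℕ} (hu : Odd u) (hs : s ≤ t) :
    (2 ^ t * u).testBit s = decide (s = t) := by
  obtain ⟨w, hw⟩ := exists_two_pow_mul_odd_eq (t := t) hu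
  rw [hw, testBit_two_pow_mul_add _ (Nat.pow_lt_pow_right one_lt_two t.lt_succ_self),
    if_pos (Nat.lt_succ_of_le hs), testBit_two_pow]
  simp [eq_comm]

lemma testBit_two_pow_mul_odd_sub_one {t u : ℕ} (hu : Odd u) (s : ℕ) :
    (2 ^ t * u - 1).testBit s = if s ≤ t then decide (s < t) else (2 ^ t * u).testBit s := by
  obtain ⟨w, hw⟩ := exists_two_pow_mul_odd_eq (t := t) hu
  have hlt : ∀ c, c ≤ 2 ^ t → c < 2 ^ (t + 1) := fun c hc => by
    rw [pow_succ]; have := Nat.two_pow_pos t; omega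
  have hsub : 2 ^ t * u - 1 = 2 ^ (t + 1) * w + (2 ^ t - 1) := by
    have := Nat.one_le_two_pow (n := t); omega
  rw [hsub, hw, testBit_two_pow_mul_add _ (hlt _ (Nat.sub_le _ _)),
    testBit_two_pow_mul_add _ (hlt _ le_rfl), testBit_two_pow_sub_one]
  by_cases hs : s ≤ t
  · simp [hs, Nat.lt_succ_of_le hs]
  · simp [hs, show ¬ s < t + 1 by omega]

end Nat

lemma tauD_eq_one_iff (m k i : ℕ) : tauD m k i = 1 ↔ (k - 1).testBit (m - i) := by
  simp [tauD, Nat.testBit_eq_decide_div_mod_eq]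

lemma ite_tauD_succ_sub_ite_tauD {m t u i : ℕ} (b : ℕ → ℝ) (hu : Odd u) (ht : t < m)
    (hi : i ∈ Icc 1 m) :
    (if tauD m (2 ^ t * u + 1) i = 1 then b i else -b i)
        - (if tauD m (2 ^ t * u) i = 1 then b i else -b i)
      = 2 * (if i = m - t then b i else 0) - 2 * (if m - t < i then b i else 0) := by
  rw [mem_Icc] at hi
  simp only [tauD_eq_one_iff, Nat.add_sub_cancel, Nat.testBit_two_pow_mul_odd_sub_one hu]
  by_cases hs : m - i ≤ t
  · rw [if_pos hs, Nat.testBit_two_pow_mul_odd_of_le hu hs]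
    rcases lt_or_eq_of_le hs with hs | hs
    · simp [hs, hs.ne, show i ≠ m - t by omega, show m - t < i by omega]; ring
    · obtain rfl : i = m - t := by omega
      simp [hs]; ring
  · simp [hs, show i ≠ m - t by omega, show ¬ m - t < i by omega]

lemma betaD_succ_sub_betaD {m t u : ℕ} (b : ℕ → ℝ) (hu : Odd u) (ht : t < m) :
    (betaD m b (2 ^ t * u + 1) - betaD m b (2 ^ t * u)) / 2
      = b (m - t) - ∑ j ∈ Icc (m - t + 1) m, b j := by
  have hfilter : {i ∈ Icc 1 m | m - t < i} = Icc (m - t + 1) m := by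
    ext i; simp only [mem_filter, mem_Icc]; omega
  rw [betaD, betaD, ← sum_sub_distrib,
    sum_congr rfl fun i hi => ite_tauD_succ_sub_ite_tauD b hu ht hi, sum_sub_distrib,
    ← mul_sum, ← mul_sum, sum_ite_eq', ← sum_filter, hfilter,
    if_pos (mem_Icc.2 ⟨by omega, by omega⟩)]
  ring

theorem stmt_16 (m : ℕ) (hm : 1 ≤ m) (b : ℕ → ℝ) :
    {x : ℝ | ∃ k, 1 ≤ k ∧ k ≤ 2 ^ m - 1
        ∧ x = (betaD m b (k + 1) - betaD m b k) / 2}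
      = {b m} ∪ {x : ℝ | ∃ i, 1 ≤ i ∧ i ≤ m - 1
          ∧ x = b i - ∑ j ∈ Finset.Icc (i + 1) m, b j} := by
  ext x
  simp only [Set.mem_ofPred_eq, Set.mem_union, Set.mem_singleton_iff]
  constructor
  · rintro ⟨k, hk1, hk2, rfl⟩
    obtain ⟨t, u, hu, rfl⟩ := Nat.exists_eq_two_pow_mul_odd (n := k) (by omega)
    have ht : t < m := (Nat.pow_lt_pow_iff_right one_lt_two).1 <|
      (Nat.le_mul_of_pos_right _ hu.pos).trans_lt (by omega)
    rw [betaD_succ_sub_betaD b hu ht]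
    rcases t.eq_zero_or_pos with rfl | ht0
    · simp
    · exact Or.inr ⟨m - t, by omega, by omega, rfl⟩
  · rintro (rfl | ⟨i, hi1, hi2, rfl⟩)
    · refine ⟨1, le_rfl, Nat.le_sub_one_of_lt (Nat.one_lt_two_pow (by omega)), ?_⟩
      simpa using (betaD_succ_sub_betaD b odd_one (show 0 < m by omega)).symm
    · refine ⟨2 ^ (m - i), Nat.one_le_two_pow,
        Nat.le_sub_one_of_lt (Nat.pow_lt_pow_right one_lt_two (show m - i < m by omega)), ?_⟩
      simpa [Nat.sub_sub_self (by omega : i ≤ m)] using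
        (betaD_succ_sub_betaD b odd_one (show m - i < m by omega)).symm
end

section
/- Let m ≥ 1 and let b_1,…,b_m > 0 satisfy b_i > Σ_{j=i+1}^m b_j for every 1 ≤ i ≤ m − 1. Let 2 ≤ k ≤ 2^m. If y ∈ ℝ^m is such that for every integer j with k ≤ j ≤ 2^m there exists an index i ∈ {1,…,m} with y_i ≡ π·τ_i(j) (mod 2π), then Σ_{i=1}^m b_i cos(y_i) ≤ β(k − 1). -/
/-
Give `y` the binary pattern `j` whose digit `i` is `1` exactly when `cos yᵢ ≠ -1`.
No coordinate of `y` matches this pattern, so `j < k`, and termwise `∑ bᵢ cos yᵢ ≤ β(j)`.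
The dominance `bᵢ > ∑_{l > i} b_l` makes `β` strictly increasing on `[1, 2^m]`: the leading
binary digit in which two patterns differ outweighs all later ones. Hence `β(j) ≤ β(k - 1)`.
-/

open Finset

theorem Nat.exists_testBit_of_lt {p q : ℕ} (h : p < q) :
    ∃ a, q.testBit a ∧ ¬ p.testBit a ∧ ∀ j, p.testBit j → ¬ q.testBit j → j < a := by
  simpa [Colex.toColex_lt_toColex_iff_exists_forall_lt] using orderIsoColex.lt_iff_lt.2 h

theorem Finset.sum_Icc_eq_sum_Ico_add_add_sum_Icc {M : Type*} [AddCommMonoid M] (f : ℕ → M)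
    {a i m : ℕ} (hai : a ≤ i) (him : i ≤ m) :
    ∑ j ∈ Icc a m, f j = ∑ j ∈ Ico a i, f j + f i + ∑ j ∈ Icc (i + 1) m, f j := by
  rw [← Ico_add_one_right_eq_Icc, ← Ico_add_one_right_eq_Icc,
    ← sum_Ico_consecutive f hai (show i ≤ m + 1 by omega),
    sum_eq_sum_Ico_succ_bot (show i < m + 1 by omega), add_assoc]

theorem Real.cos_pi_mul_add_two_pi_mul (τ : ℕ) (n : ℤ) :
    Real.cos (Real.pi * τ + 2 * Real.pi * n) = (-1) ^ τ := by
  rw [mul_comm Real.pi, mul_comm (2 * Real.pi), Real.cos_add_int_mul_two_pi, Real.cos_nat_mul_pi]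

theorem tauD_eq_toNat_testBit (m k i : ℕ) : tauD m k i = ((k - 1).testBit (m - i)).toNat :=
  (Nat.toNat_testBit _ _).symm

theorem betaD_eq_sum_testBit (m : ℕ) (b : ℕ → ℝ) (k : ℕ) :
    betaD m b k = ∑ i ∈ Icc 1 m, if (k - 1).testBit (m - i) then b i else -b i := by
  refine sum_congr rfl fun i _ => ?_
  cases h : (k - 1).testBit (m - i) <;> simp [tauD_eq_toNat_testBit, h]

section

variable {m : ℕ} {b : ℕ → ℝ}

theorem betaD_strictMonoOn (hb : ∀ i, 1 ≤ i → i ≤ m → 0 < b i)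
    (hdom : ∀ i, 1 ≤ i → i ≤ m - 1 → (∑ j ∈ Icc (i + 1) m, b j) < b i) :
    StrictMonoOn (betaD m b) (Set.Icc 1 (2 ^ m)) := by
  intro k hk k' hk' hkk'
  set p := k - 1
  set q := k' - 1
  obtain ⟨a, hqa, hpa, hlow⟩ := Nat.exists_testBit_of_lt (show p < q by grind)
  have ham : a < m := by
    have := Nat.ge_two_pow_of_testBit hqa
    have := (Nat.pow_lt_pow_iff_right (a := 2) (by norm_num)).1 (by grind : 2 ^ a < 2 ^ m)
    omega
  set i₀ := m - a
  have hpos : ∀ i ∈ Icc 1 m, 0 < b i := fun i hi => hb i (mem_Icc.1 hi).1 (mem_Icc.1 hi).2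
  have hdom₀ : ∑ j ∈ Icc (i₀ + 1) m, b j < b i₀ := by
    rcases Nat.lt_or_ge i₀ m with h | h
    · exact hdom i₀ (by omega) (by omega)
    · rw [Icc_eq_empty (by omega), sum_empty]
      exact hb i₀ (by omega) (by omega)
  set d : ℕ → ℝ := fun i =>
    (if q.testBit (m - i) then b i else -b i) - if p.testBit (m - i) then b i else -b i
  have hdiff : betaD m b k' - betaD m b k = ∑ i ∈ Icc 1 m, d i := by
    rw [betaD_eq_sum_testBit, betaD_eq_sum_testBit, ← sum_sub_distrib]
  have hhigh : 0 ≤ ∑ i ∈ Ico 1 i₀, d i := by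
    refine sum_nonneg fun i hi => ?_
    have := hpos i (by simp at hi ⊢; omega)
    have := hlow (m - i)
    simp only [d]
    split_ifs <;> grind
  have hlead : d i₀ = 2 * b i₀ := by
    simp only [d, show m - i₀ = a by omega, hqa, hpa]
    norm_num
    ring
  have hrest : -(2 * ∑ i ∈ Icc (i₀ + 1) m, b i) ≤ ∑ i ∈ Icc (i₀ + 1) m, d i := by
    rw [mul_sum, ← sum_neg_distrib]
    refine sum_le_sum fun i hi => ?_
    have := hpos i (by simp at hi ⊢; omega)
    simp only [d]
    split_ifs <;> linarith
  rw [← sub_pos, hdiff,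
    sum_Icc_eq_sum_Ico_add_add_sum_Icc d (show 1 ≤ i₀ by omega) (show i₀ ≤ m by omega)]
  linarith

theorem exists_avoided_pattern_le_betaD (hb : ∀ i, 1 ≤ i → i ≤ m → 0 ≤ b i)
    (c : ℕ → ℝ) (hc : ∀ i, 1 ≤ i → i ≤ m → c i ≤ 1) :
    ∃ j, 1 ≤ j ∧ j ≤ 2 ^ m ∧ (∀ i, 1 ≤ i → i ≤ m → c i ≠ (-1) ^ tauD m j i) ∧
      ∑ i ∈ Icc 1 m, b i * c i ≤ betaD m b j := by
  set p := Nat.ofBits fun n : Fin m => decide (c (m - n) ≠ -1)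
  have hbit : ∀ i, 1 ≤ i → i ≤ m → (p.testBit (m - i) ↔ c i ≠ -1) := by
    intro i h1 h2
    rw [Nat.testBit_ofBits_lt _ (m - i) (by omega)]
    simp [Nat.sub_sub_self h2]
  refine ⟨p + 1, by omega, Nat.ofBits_lt_two_pow _, fun i h1 h2 => ?_, ?_⟩
  · have := hbit i h1 h2
    rw [tauD_eq_toNat_testBit, Nat.add_sub_cancel]
    cases h : p.testBit (m - i)
    · rw [show c i = -1 by simpa [h] using this]
      norm_num
    · simpa [h] using this
  · rw [betaD_eq_sum_testBit, Nat.add_sub_cancel]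
    refine sum_le_sum fun i hi => ?_
    obtain ⟨h1, h2⟩ := mem_Icc.1 hi
    have := hbit i h1 h2
    split_ifs with h
    · exact mul_le_of_le_one_right (hb i h1 h2) (hc i h1 h2)
    · rw [show c i = -1 by simpa [h] using this, mul_neg_one]

end

theorem stmt_18_general (m : ℕ) (b : ℕ → ℝ)
    (hb : ∀ i, 1 ≤ i → i ≤ m → 0 < b i)
    (hdom : ∀ i, 1 ≤ i → i ≤ m - 1 → (∑ j ∈ Finset.Icc (i + 1) m, b j) < b i)
    (k : ℕ) (hk2 : k ≤ 2 ^ m)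
    (y : ℕ → ℝ)
    (hy : ∀ j, k ≤ j → j ≤ 2 ^ m → ∃ i, 1 ≤ i ∧ i ≤ m ∧
      ∃ n : ℤ, y i = Real.pi * (tauD m j i : ℝ) + 2 * Real.pi * (n : ℝ)) :
    ∑ i ∈ Finset.Icc 1 m, b i * Real.cos (y i) ≤ betaD m b (k - 1) := by
  obtain ⟨j, hj1, hj2, havoid, hle⟩ := exists_avoided_pattern_le_betaD
    (fun i h1 h2 => (hb i h1 h2).le) (fun i => Real.cos (y i)) (fun i _ _ => Real.cos_le_one (y i))
  have hjk : j < k := by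
    by_contra! hkj
    obtain ⟨i, h1, h2, n, hyi⟩ := hy j hkj hj2
    exact havoid i h1 h2 (by rw [hyi, Real.cos_pi_mul_add_two_pi_mul])
  calc ∑ i ∈ Icc 1 m, b i * Real.cos (y i) ≤ betaD m b j := hle
    _ ≤ betaD m b (k - 1) :=
      (betaD_strictMonoOn hb hdom).monotoneOn ⟨hj1, hj2⟩ ⟨by omega, by omega⟩ (by omega)

theorem stmt_18 (m : ℕ) (hm : 1 ≤ m) (b : ℕ → ℝ)
    (hb : ∀ i, 1 ≤ i → i ≤ m → 0 < b i)
    (hdom : ∀ i, 1 ≤ i → i ≤ m - 1 → (∑ j ∈ Finset.Icc (i + 1) m, b j) < b i)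
    (k : ℕ) (hk1 : 2 ≤ k) (hk2 : k ≤ 2 ^ m)
    (y : ℕ → ℝ)
    (hy : ∀ j, k ≤ j → j ≤ 2 ^ m → ∃ i, 1 ≤ i ∧ i ≤ m ∧
      ∃ n : ℤ, y i = Real.pi * (tauD m j i : ℝ) + 2 * Real.pi * (n : ℝ)) :
    ∑ i ∈ Finset.Icc 1 m, b i * Real.cos (y i) ≤ betaD m b (k - 1) :=
  stmt_18_general m b hb hdom k hk2 y hy
end
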